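/- Let $b>0$, $L-R>0$, $p\neq 0$ with $p^4<\frac{8(L-R)^3}{27b}$. Then the cubic $\frac{b}{2}h^3-(L-R)h+p^2=0$ has exactly three real roots: one negative root and two positive roots. -/

import Mathlib

/-!
The cubic has its local minimum at `q = √(2(L - R)/(3b))`, with value `p² - 2/3 (L - R) q`,
and the discriminant condition says exactly that this value is negative. Since the cubic is
positive at `0` and at `2q` and takes its minimum value again at `-2q`, the intermediate value
theorem gives roots in `(-2q, 0)`, `(0, q)` and `(q, 2q)`, and a cubic has no further roots.
-/

open Set

theorem eq_or_eq_or_eq_of_depressed_cubic_eq_zero {R : Type*} [CommRing R] [IsDomain R]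
    {a s d x₁ x₂ x₃ x : R} (ha : a ≠ 0) (h₁₂ : x₁ ≠ x₂) (h₁₃ : x₁ ≠ x₃) (h₂₃ : x₂ ≠ x₃)
    (hx₁ : a * x₁ ^ 3 - s * x₁ + d = 0) (hx₂ : a * x₂ ^ 3 - s * x₂ + d = 0)
    (hx₃ : a * x₃ ^ 3 - s * x₃ + d = 0) (hx : a * x ^ 3 - s * x + d = 0) :
    x = x₁ ∨ x = x₂ ∨ x = x₃ := by
  by_contra! hne
  obtain ⟨h₁, h₂, h₃⟩ := hne
  -- Lagrange interpolation at four nodes recovers the leading coefficient of a cubic.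
  have hV : a * ((x₁ - x₂) * (x₁ - x₃) * (x₁ - x) * (x₂ - x₃) * (x₂ - x) * (x₃ - x)) = 0 := by
    linear_combination (x₂ - x₃) * (x₂ - x) * (x₃ - x) * hx₁
      - (x₁ - x₃) * (x₁ - x) * (x₃ - x) * hx₂ + (x₁ - x₂) * (x₁ - x) * (x₂ - x) * hx₃
      - (x₁ - x₂) * (x₁ - x₃) * (x₂ - x₃) * hx
  simp [ha, sub_eq_zero, h₁₂, h₁₃, h₂₃, h₁.symm, h₂.symm, h₃.symm] at hV

theorem exists_three_roots_depressed_cubic {a s d q : ℝ} (hq : 0 < q)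
    (hcrit : 3 * a * q ^ 2 = s) (hd : 0 < d) (hdq : d < 2 / 3 * s * q) :
    ∃ x₁ ∈ Ioo (-2 * q) 0, ∃ x₂ ∈ Ioo 0 q, ∃ x₃ ∈ Ioo q (2 * q),
      a * x₁ ^ 3 - s * x₁ + d = 0 ∧ a * x₂ ^ 3 - s * x₂ + d = 0 ∧
        a * x₃ ^ 3 - s * x₃ + d = 0 := by
  set f : ℝ → ℝ := fun x => a * x ^ 3 - s * x + d
  have hf : Continuous f := by fun_prop
  -- `f x - f q = a (x - q) ^ 2 (x + 2 q)`, as `q` is a critical point and the roots sum to `0`.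
  have hf_neg : f (-2 * q) = d - 2 / 3 * s * q := by linear_combination (-8 * q / 3) * hcrit
  have hf_q : f q = d - 2 / 3 * s * q := by linear_combination (q / 3) * hcrit
  have hf_two : f (2 * q) = d + 2 / 3 * s * q := by linear_combination (8 * q / 3) * hcrit
  have hf_zero : f 0 = d := by simp [f]
  obtain ⟨x₁, hx₁, e₁⟩ := intermediate_value_Ioo (by linarith) hf.continuousOn
    (show (0 : ℝ) ∈ Ioo (f (-2 * q)) (f 0) by constructor <;> linarith)
  obtain ⟨x₂, hx₂, e₂⟩ := intermediate_value_Ioo' hq.le hf.continuousOn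
    (show (0 : ℝ) ∈ Ioo (f q) (f 0) by constructor <;> linarith)
  obtain ⟨x₃, hx₃, e₃⟩ := intermediate_value_Ioo (by linarith) hf.continuousOn
    (show (0 : ℝ) ∈ Ioo (f q) (f (2 * q)) by constructor <;> linarith)
  exact ⟨x₁, hx₁, x₂, hx₂, x₃, hx₃, e₁, e₂, e₃⟩

/-- under the strict discriminant condition, the depth-recovery
cubic has exactly three real roots: one negative and two positive. -/
theorem cubic_three_roots
    (b R L p : ℝ) (hb : 0 < b) (hLR : 0 < L - R) (hp : p ≠ 0)
    (hdisc : p ^ 4 < 8 * (L - R) ^ 3 / (27 * b)) :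
    ∃ h₁ h₂ h₃ : ℝ, h₁ < 0 ∧ 0 < h₂ ∧ 0 < h₃ ∧ h₂ ≠ h₃ ∧
      ∀ h : ℝ, b / 2 * h ^ 3 - (L - R) * h + p ^ 2 = 0 ↔
        (h = h₁ ∨ h = h₂ ∨ h = h₃) := by
  set q := √(2 * (L - R) / (3 * b))
  have hq : 0 < q := Real.sqrt_pos.mpr (by positivity)
  have hq_sq : q ^ 2 = 2 * (L - R) / (3 * b) := Real.sq_sqrt (by positivity)
  have hcrit : 3 * (b / 2) * q ^ 2 = L - R := by rw [hq_sq]; field_simp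
  have hp_lt : p ^ 2 < 2 / 3 * (L - R) * q := by
    refine lt_of_pow_lt_pow_left₀ 2 (by positivity) ?_
    calc (p ^ 2) ^ 2 = p ^ 4 := by ring
      _ < 8 * (L - R) ^ 3 / (27 * b) := hdisc
      _ = (2 / 3 * (L - R) * q) ^ 2 := by rw [mul_pow, hq_sq]; field_simp; ring
  obtain ⟨h₁, ⟨-, h₁_neg⟩, h₂, ⟨h₂_pos, h₂_lt⟩, h₃, ⟨h₃_gt, -⟩, e₁, e₂, e₃⟩ :=
    exists_three_roots_depressed_cubic hq hcrit (by positivity) hp_lt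
  refine ⟨h₁, h₂, h₃, h₁_neg, h₂_pos, by linarith, by linarith, fun h => ⟨fun e => ?_, ?_⟩⟩
  · exact eq_or_eq_or_eq_of_depressed_cubic_eq_zero (by positivity) (by linarith) (by linarith)
      (by linarith) e₁ e₂ e₃ e
  · rintro (rfl | rfl | rfl) <;> assumption
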